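/- arXiv:math/0002175 — 3 statements merged into one kernel-verified Lean document; each statement's English description precedes it below -/
import Mathlib

section
/- Let T(·,·) be a C² function on the strip with values in [0,1], let I_j = [c_j−h_j, c_j+h_j] ⊂ [0,H], and fix x such that there exists y' ∈ I_j with T(x,y') ∈ [θ₁, θ₄]. Then there is a universal constant C > 0 (independent of T, f, and all the parameters) such that | κ ∫_{c_j−h_j}^{c_j+h_j} G(h_j, y−c_j) T_{yy}(x,y) dy | ≤ C f₀^{-1/2} ζ^{-1} (κ/(v₀ h_j)) [ (v₀²/κ) ∫_{c_j−h_j}^{c_j+h_j} f(T(x,y)) dy + κ ∫_{c_j−h_j}^{c_j+h_j} |∇T(x,y)|² dy ]. -/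
/-!
The kernel integral is the second difference `(T(x,c+h) - 2T(x,c) + T(x,c-h))/h` (integrate by
parts on each half of `I_j`). Since `0 ≤ T ≤ 1` it is at most `2/h`, and integrating
`2 m T_y - m² ≤ T_y²` bounds it by `∫ T_y²` as well. Starting from `y'`, either `T(x,·)` stays in
the band `(θ₁ - ζ, θ₄ + ζ)` on all of `I_j`, so that `∫ f(T) ≥ 2 f₀ h` and the gradient bound
suffices; or it leaves the band, at a nearest point `z` say. Then `∫ f(T) ≥ f₀ |z - y'|`, while
Cauchy–Schwarz gives `ζ² ≤ |z - y'| ∫ T_y²`, and AM-GM in `|z - y'|` turns these two into a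
bound on `2/h`.
-/

set_option autoImplicit false

open MeasureTheory Real Filter Set

noncomputable section

/-- the averaging kernel `G(h,ξ) = max(1 - |ξ|/h, 0)`. -/
def kerG (h ξ : ℝ) : ℝ := max (1 - |ξ| / h) 0

/-- partial derivative of a function of two variables in the first variable. -/
def qX (T : ℝ → ℝ → ℝ) (x y : ℝ) : ℝ := deriv (fun s => T s y) x
/-- partial derivative in the second variable. -/
def qY (T : ℝ → ℝ → ℝ) (x y : ℝ) : ℝ := deriv (fun s => T x s) y
/-- second partial derivative in the second variable. -/
def qYY (T : ℝ → ℝ → ℝ) (x y : ℝ) : ℝ := deriv (fun s => qY T x s) y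

def secondDiff (g : ℝ → ℝ) (c h : ℝ) : ℝ := g (c + h) - 2 * g c + g (c - h)

section

variable {g : ℝ → ℝ}

theorem integral_sub_mul_deriv_deriv (hg : ContDiff ℝ 2 g) (a b : ℝ) :
    ∫ y in a..b, (y - a) * deriv (deriv g) y = (b - a) * deriv g b - (g b - g a) := by
  have hg' : ContDiff ℝ 1 (deriv g) := hg.iterate_deriv' 1 1
  rw [intervalIntegral.integral_mul_deriv_eq_deriv_mul_of_hasDerivAt (u := fun y => y - a)
      (u' := fun _ => 1) (by fun_prop) hg'.continuous.continuousOn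
      (fun y _ => (hasDerivAt_id y).sub_const a)
      (fun y _ => ((hg'.differentiable one_ne_zero) y).hasDerivAt) intervalIntegrable_const
      ((hg'.continuous_deriv le_rfl).intervalIntegrable _ _)]
  simp only [sub_self, zero_mul, sub_zero, one_mul]
  rw [intervalIntegral.integral_deriv_eq_sub (fun y _ => (hg.differentiable two_ne_zero) y)
    (hg'.continuous.intervalIntegrable _ _)]

theorem kerG_of_abs_le {h ξ : ℝ} (hh : 0 < h) (hξ : |ξ| ≤ h) : kerG h ξ = 1 - |ξ| / h :=
  max_eq_left (sub_nonneg.2 ((div_le_one hh).2 hξ))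

theorem setIntegral_kerG_mul_deriv_deriv (hg : ContDiff ℝ 2 g) {h : ℝ} (hh : 0 < h) (c : ℝ) :
    ∫ y in Icc (c - h) (c + h), kerG h (y - c) * deriv (deriv g) y =
      secondDiff g c h / h := by
  have hg'' : Continuous (deriv (deriv g)) := (hg.iterate_deriv' 1 1).continuous_deriv le_rfl
  have hcont : Continuous fun y => kerG h (y - c) * deriv (deriv g) y := by
    unfold kerG; fun_prop
  have hleft : ∫ y in (c - h)..c, kerG h (y - c) * deriv (deriv g) y =
      ∫ y in (c - h)..c, h⁻¹ * ((y - (c - h)) * deriv (deriv g) y) := by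
    refine intervalIntegral.integral_congr fun y hy => ?_
    rw [uIcc_of_le (by linarith)] at hy
    have habs : |y - c| = c - y := by rw [abs_of_nonpos (by linarith [hy.2])]; ring
    rw [kerG_of_abs_le hh (by rw [habs]; linarith [hy.1]), habs]
    field_simp
    ring
  have hright : ∫ y in c..(c + h), kerG h (y - c) * deriv (deriv g) y =
      ∫ y in (c + h)..c, h⁻¹ * ((y - (c + h)) * deriv (deriv g) y) := by
    rw [intervalIntegral.integral_symm, ← intervalIntegral.integral_neg]
    refine intervalIntegral.integral_congr fun y hy => ?_
    rw [uIcc_of_ge (by linarith)] at hy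
    have habs : |y - c| = y - c := abs_of_nonneg (by linarith [hy.1])
    rw [kerG_of_abs_le hh (by rw [habs]; linarith [hy.2]), habs]
    field_simp
    ring
  rw [integral_Icc_eq_integral_Ioc, ← intervalIntegral.integral_of_le (by linarith),
    ← intervalIntegral.integral_add_adjacent_intervals (b := c) (hcont.intervalIntegrable _ _)
      (hcont.intervalIntegrable _ _), hleft, hright, intervalIntegral.integral_const_mul,
    intervalIntegral.integral_const_mul, integral_sub_mul_deriv_deriv hg,
    integral_sub_mul_deriv_deriv hg, secondDiff]
  field_simp
  ring

theorem two_mul_sub_le_integral_deriv_sq (hg : ContDiff ℝ 1 g) {p r : ℝ} (hpr : p ≤ r) (m : ℝ) :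
    2 * m * (g r - g p) ≤ (∫ y in p..r, deriv g y ^ 2) + m ^ 2 * (r - p) := by
  have hcont : Continuous (deriv g) := hg.continuous_deriv le_rfl
  have hftc : ∫ y in p..r, deriv g y = g r - g p :=
    intervalIntegral.integral_deriv_eq_sub (fun y _ => (hg.differentiable one_ne_zero) y)
      (hcont.intervalIntegrable _ _)
  have hmono : ∫ y in p..r, (2 * m * deriv g y - m ^ 2) ≤ ∫ y in p..r, deriv g y ^ 2 :=
    intervalIntegral.integral_mono_on hpr ((by fun_prop : Continuous fun y =>
      2 * m * deriv g y - m ^ 2).intervalIntegrable _ _) ((hcont.pow 2).intervalIntegrable _ _)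
      fun y _ => by nlinarith [sq_nonneg (deriv g y - m)]
  rw [intervalIntegral.integral_sub ((hcont.const_mul _).intervalIntegrable _ _)
    intervalIntegrable_const, intervalIntegral.integral_const_mul, hftc,
    intervalIntegral.integral_const, smul_eq_mul] at hmono
  linarith

theorem two_mul_abs_secondDiff_le (hg : ContDiff ℝ 1 g) {c h : ℝ} (hh : 0 ≤ h) (m : ℝ) :
    2 * m * |secondDiff g c h| ≤
      (∫ y in (c - h)..(c + h), deriv g y ^ 2) + 2 * m ^ 2 * h := by
  have hsq : Continuous fun y => deriv g y ^ 2 := (hg.continuous_deriv le_rfl).pow 2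
  have hsplit := intervalIntegral.integral_add_adjacent_intervals (b := c) (μ := volume)
    (hsq.intervalIntegrable (c - h) c) (hsq.intervalIntegrable c (c + h))
  have hl := two_mul_sub_le_integral_deriv_sq hg (by linarith : c - h ≤ c)
  have hr := two_mul_sub_le_integral_deriv_sq hg (by linarith : c ≤ c + h)
  rw [← hsplit]
  rcases abs_cases (secondDiff g c h) with ⟨hD, -⟩ | ⟨hD, -⟩ <;> rw [hD, secondDiff]
  · linarith [hl (-m), hr m, neg_sq m]
  · linarith [hl m, hr (-m), neg_sq m]

theorem sq_sub_le_mul_integral_deriv_sq (hg : ContDiff ℝ 1 g) {p r : ℝ} (hpr : p ≤ r) :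
    (g r - g p) ^ 2 ≤ (r - p) * ∫ y in p..r, deriv g y ^ 2 := by
  rcases hpr.eq_or_lt with rfl | hlt
  · simp
  have key := two_mul_sub_le_integral_deriv_sq hg hpr ((g r - g p) / (r - p))
  have hrp : 0 < r - p := sub_pos.2 hlt
  field_simp at key
  nlinarith

theorem abs_secondDiff_le_two (hg : ∀ y, g y ∈ Icc (0 : ℝ) 1) (c h : ℝ) :
    |secondDiff g c h| ≤ 2 := by
  have h₁ := hg (c + h)
  have h₂ := hg c
  have h₃ := hg (c - h)
  exact abs_le.2 ⟨by rw [secondDiff]; linarith [h₁.1, h₂.2, h₃.1],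
    by rw [secondDiff]; linarith [h₁.2, h₂.1, h₃.2]⟩

theorem exists_notMem_mapsTo_uIoo {U : Set ℝ} {a b y : ℝ} (hU : IsOpen U)
    (hg : ContinuousOn g (Icc a b)) (hy : y ∈ Icc a b) (hout : ¬MapsTo g (Icc a b) U) :
    ∃ z ∈ Icc a b, g z ∉ U ∧ MapsTo g (uIoo y z) U := by
  have hS : IsCompact (Icc a b ∩ g ⁻¹' Uᶜ) :=
    isCompact_Icc.of_isClosed_subset (hg.preimage_isClosed_of_isClosed isClosed_Icc
      hU.isClosed_compl) inter_subset_left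
  obtain ⟨w, hw, hgw⟩ := not_forall₂.1 hout
  -- the exit point nearest to `y`
  obtain ⟨z, ⟨hzI, hzU⟩, hmin⟩ := hS.exists_isMinOn ⟨w, hw, hgw⟩
    (continuous_id.sub continuous_const).abs.continuousOn (f := fun w => |w - y|)
  refine ⟨z, hzI, hzU, fun w hw => by_contra fun hwU => ?_⟩
  have hwI : w ∈ Icc a b := uIcc_subset_Icc hy hzI (uIoo_subset_uIcc_self hw)
  have hle : |z - y| ≤ |w - y| := hmin ⟨hwI, hwU⟩
  have hlt : |w - y| < |z - y| := by
    rcases le_total y z with hyz | hyz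
    · rw [uIoo_of_le hyz] at hw
      exact abs_lt.2 ⟨by linarith [hw.1, abs_nonneg (z - y)],
        by linarith [hw.2, le_abs_self (z - y)]⟩
    · rw [uIoo_of_ge hyz] at hw
      exact abs_lt.2 ⟨by linarith [hw.1, neg_abs_le (z - y)],
        by linarith [hw.2, abs_nonneg (z - y)]⟩
  exact hlt.not_ge hle

theorem mul_sub_le_setIntegral_Icc {φ : ℝ → ℝ} {a b p r m : ℝ} (hφ : IntegrableOn φ (Icc a b))
    (hφ0 : ∀ y ∈ Icc a b, 0 ≤ φ y) (hpr : p ≤ r) (hsub : Ioo p r ⊆ Icc a b)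
    (hm : ∀ y ∈ Ioo p r, m ≤ φ y) : m * (r - p) ≤ ∫ y in Icc a b, φ y :=
  calc m * (r - p) = ∫ _ in Ioo p r, m := by
        rw [setIntegral_const, Real.volume_real_Ioo_of_le hpr, smul_eq_mul, mul_comm]
    _ ≤ ∫ y in Ioo p r, φ y :=
        setIntegral_mono_on (integrableOn_const (by simp)) (hφ.mono_set hsub) measurableSet_Ioo hm
    _ ≤ ∫ y in Icc a b, φ y :=
        setIntegral_mono_set hφ ((ae_restrict_iff' measurableSet_Icc).2 (.of_forall hφ0))
          (.of_forall hsub)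

theorem sqrt_mul_abs_le_of_mul_le_of_sq_le {κ v0 f0 ζ d D F Q : ℝ} (hκ : 0 < κ) (hv0 : 0 ≤ v0)
    (hf0 : 0 ≤ f0) (hζ : 0 ≤ ζ) (hd : 0 < d) (hF : f0 * d ≤ F) (hQ : ζ ^ 2 ≤ d * Q)
    (hD : |D| ≤ 2) :
    √f0 * ζ * v0 * |D| ≤ 2 * (v0 ^ 2 / κ * F + κ * Q) := by
  have hamgm : 2 * (√f0 * ζ * v0) * κ * d ≤ v0 ^ 2 * (f0 * d) * d + κ ^ 2 * ζ ^ 2 := by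
    have hsq : v0 ^ 2 * (f0 * d) * d = (√f0 * v0 * d) ^ 2 := by
      rw [mul_pow, mul_pow, sq_sqrt hf0]; ring
    rw [hsq]
    nlinarith [sq_nonneg (√f0 * v0 * d - κ * ζ)]
  have hκF : 2 * (√f0 * ζ * v0) * κ ≤ v0 ^ 2 * F + κ ^ 2 * Q := by
    refine le_of_mul_le_mul_right ?_ hd
    nlinarith [mul_le_mul_of_nonneg_left hF (sq_nonneg v0),
      mul_le_mul_of_nonneg_left hQ (sq_nonneg κ)]
  have hpos : 0 ≤ √f0 * ζ * v0 := by positivity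
  calc √f0 * ζ * v0 * |D| ≤ √f0 * ζ * v0 * 2 := mul_le_mul_of_nonneg_left hD hpos
    _ ≤ (v0 ^ 2 * F + κ ^ 2 * Q) / κ := by rw [le_div_iff₀ hκ]; linarith
    _ ≤ 2 * ((v0 ^ 2 * F + κ ^ 2 * Q) / κ) := by
        have : 0 ≤ v0 ^ 2 * F + κ ^ 2 * Q := (by positivity : 0 ≤ 2 * (√f0 * ζ * v0) * κ).trans hκF
        linarith [div_nonneg this hκ.le]
    _ = 2 * (v0 ^ 2 / κ * F + κ * Q) := by field_simp

theorem sqrt_mul_abs_secondDiff_le_of_mul_le (hg : ContDiff ℝ 1 g) {κ v0 f0 ζ c h F : ℝ}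
    (hκ : 0 < κ) (hv0 : 0 ≤ v0) (hf0 : 0 ≤ f0) (hh : 0 ≤ h) (hζ : ζ ≤ 1 / 2)
    (hF : f0 * (2 * h) ≤ F) :
    √f0 * ζ * v0 * |secondDiff g c h| ≤
      2 * (v0 ^ 2 / κ * F + κ * ∫ y in (c - h)..(c + h), deriv g y ^ 2) := by
  have hD := mul_le_mul_of_nonneg_left
    (two_mul_abs_secondDiff_le hg (c := c) hh (√f0 * v0 / (2 * κ))) hκ.le
  set Q := ∫ y in (c - h)..(c + h), deriv g y ^ 2
  have hQ : 0 ≤ Q := intervalIntegral.integral_nonneg (by linarith) fun y _ => sq_nonneg _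
  have hκ0 : κ ≠ 0 := hκ.ne'
  have key : √f0 * v0 * |secondDiff g c h| ≤ κ * Q + v0 ^ 2 / κ * (f0 * h) / 2 := by
    have hl : κ * (2 * (√f0 * v0 / (2 * κ)) * |secondDiff g c h|) =
        √f0 * v0 * |secondDiff g c h| := by field_simp
    have hr : κ * (Q + 2 * (√f0 * v0 / (2 * κ)) ^ 2 * h) = κ * Q + v0 ^ 2 / κ * (f0 * h) / 2 := by
      rw [div_pow, mul_pow, sq_sqrt hf0]
      field_simp
    rwa [hl, hr] at hD
  have hAF := mul_le_mul_of_nonneg_left hF (by positivity : 0 ≤ v0 ^ 2 / κ)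
  have hAf0 : 0 ≤ v0 ^ 2 / κ * (f0 * h) := by positivity
  have hpos : 0 ≤ √f0 * v0 * |secondDiff g c h| := by positivity
  have hζD : √f0 * ζ * v0 * |secondDiff g c h| ≤ √f0 * v0 * |secondDiff g c h| / 2 := by
    nlinarith
  linarith

theorem sqrt_mul_abs_secondDiff_le_setIntegral {f : ℝ → ℝ} {κ v0 θ1 θ4 f0 ζ c h y : ℝ}
    (hg : ContDiff ℝ 1 g) (hg01 : ∀ y, g y ∈ Icc (0 : ℝ) 1) (hf : ContinuousOn f (Icc 0 1))
    (hfnn : ∀ s ∈ Icc (0 : ℝ) 1, 0 ≤ f s) (hfpos : ∀ θ ∈ Ioo (θ1 - ζ) (θ4 + ζ), f0 < f θ)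
    (hκ : 0 < κ) (hv0 : 0 ≤ v0) (hf0 : 0 ≤ f0) (hζ : 0 < ζ) (hζ2 : ζ ≤ 1 / 2) (hh : 0 ≤ h)
    (hy : y ∈ Icc (c - h) (c + h)) (hgy : g y ∈ Icc θ1 θ4) :
    √f0 * ζ * v0 * |secondDiff g c h| ≤
      2 * (v0 ^ 2 / κ * (∫ y in Icc (c - h) (c + h), f (g y)) +
        κ * ∫ y in Icc (c - h) (c + h), deriv g y ^ 2) := by
  have hfg : IntegrableOn (fun y => f (g y)) (Icc (c - h) (c + h)) :=
    (hf.comp_continuous hg.continuous hg01).integrableOn_Icc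
  have hfg0 : ∀ y ∈ Icc (c - h) (c + h), 0 ≤ f (g y) := fun y _ => hfnn _ (hg01 y)
  have hsq : IntegrableOn (fun y => deriv g y ^ 2) (Icc (c - h) (c + h)) :=
    ((hg.continuous_deriv le_rfl).pow 2).integrableOn_Icc
  by_cases hall : MapsTo g (Icc (c - h) (c + h)) (Ioo (θ1 - ζ) (θ4 + ζ))
  · rw [integral_Icc_eq_integral_Ioc (f := fun y => deriv g y ^ 2),
      ← intervalIntegral.integral_of_le (by linarith)]
    refine sqrt_mul_abs_secondDiff_le_of_mul_le hg hκ hv0 hf0 hh hζ2 ?_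
    calc f0 * (2 * h) = f0 * ((c + h) - (c - h)) := by ring
      _ ≤ _ := mul_sub_le_setIntegral_Icc hfg hfg0 (by linarith) Ioo_subset_Icc_self
          fun w hw => (hfpos _ (hall (Ioo_subset_Icc_self hw))).le
  obtain ⟨z, hz, hgz, hbetween⟩ :=
    exists_notMem_mapsTo_uIoo isOpen_Ioo hg.continuous.continuousOn hy hall
  have hyz : min y z < max y z :=
    min_lt_max.2 fun hyz => hgz (by rw [← hyz]; exact ⟨by linarith [hgy.1], by linarith [hgy.2]⟩)
  have hsub : uIcc y z ⊆ Icc (c - h) (c + h) := uIcc_subset_Icc hy hz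
  have hcross : ζ ≤ |g z - g y| := by
    simp only [mem_Ioo, not_and_or, not_lt] at hgz
    rcases hgz with hgz | hgz
    · exact le_abs.2 (Or.inr (by linarith [hgy.1]))
    · exact le_abs.2 (Or.inl (by linarith [hgy.2]))
  have hQ : ζ ^ 2 ≤ (max y z - min y z) * ∫ y in Icc (c - h) (c + h), deriv g y ^ 2 :=
    calc ζ ^ 2 ≤ (g z - g y) ^ 2 := by
          rw [← sq_abs (g z - g y)]; exact pow_le_pow_left₀ hζ.le hcross 2
      _ = (g (max y z) - g (min y z)) ^ 2 := by
          rcases le_total y z with hyz | hyz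
          · rw [max_eq_right hyz, min_eq_left hyz]
          · rw [max_eq_left hyz, min_eq_right hyz]; ring
      _ ≤ (max y z - min y z) * ∫ w in (min y z)..(max y z), deriv g w ^ 2 :=
          sq_sub_le_mul_integral_deriv_sq hg hyz.le
      _ ≤ _ := by
          refine mul_le_mul_of_nonneg_left ?_ (sub_nonneg.2 hyz.le)
          rw [intervalIntegral.integral_of_le hyz.le]
          exact setIntegral_mono_set hsq (.of_forall fun _ => sq_nonneg _)
            (.of_forall (Ioc_subset_Icc_self.trans hsub))
  exact sqrt_mul_abs_le_of_mul_le_of_sq_le hκ hv0 hf0 hζ.le (sub_pos.2 hyz)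
    (mul_sub_le_setIntegral_Icc hfg hfg0 hyz.le (uIoo_subset_uIcc_self.trans hsub)
      fun w hw => (hfpos _ (hbetween hw)).le) hQ (abs_secondDiff_le_two hg01 c h)

end

theorem continuous_qX {T : ℝ → ℝ → ℝ} (hT : ContDiff ℝ 1 (fun p : ℝ × ℝ => T p.1 p.2)) (x : ℝ) :
    Continuous (qX T x) := by
  have hqX : qX T x = fun y => fderiv ℝ (fun p : ℝ × ℝ => T p.1 p.2) (x, y) (1, 0) := by
    funext y
    exact (((hT.differentiable one_ne_zero) (x, y)).hasFDerivAt.comp_hasDerivAt x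
      ((hasDerivAt_id x).prodMk (hasDerivAt_const x y))).deriv
  rw [hqX]
  exact ((hT.continuous_fderiv one_ne_zero).comp (Continuous.prodMk_right x)).clm_apply
    continuous_const

theorem abs_mul_div_le_of_mul_abs_le {κ v0 s ζ h D R : ℝ} (hκ : 0 < κ) (hv0 : 0 < v0)
    (hs : 0 < s) (hζ : 0 < ζ) (hh : 0 < h) (hD : s * ζ * v0 * |D| ≤ 2 * R) :
    |κ * (D / h)| ≤ 2 * s⁻¹ * ζ⁻¹ * (κ / (v0 * h)) * R := by
  have hD' : |D| ≤ 2 * R / (s * ζ * v0) := by rw [le_div_iff₀ (by positivity)]; linarith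
  calc |κ * (D / h)| = κ / h * |D| := by
        rw [abs_mul, abs_div, abs_of_pos hκ, abs_of_pos hh]; ring
    _ ≤ κ / h * (2 * R / (s * ζ * v0)) := mul_le_mul_of_nonneg_left hD' (by positivity)
    _ = 2 * s⁻¹ * ζ⁻¹ * (κ / (v0 * h)) * R := by field_simp

/-- Lemma 2: the averaged second derivative `T_yy` is controlled
by the integrals of `f(T)` and `|∇T|²`, with a universal constant. -/
theorem averaged_Tyy_bound :
    ∃ C > 0, ∀ (κ v0 H θ1 θ4 f0 ζ c h x : ℝ) (f : ℝ → ℝ) (T : ℝ → ℝ → ℝ),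
      0 < κ → 0 < v0 → 0 < H → 0 < h →
      0 < θ1 → θ1 < θ4 → θ4 < 1 → 0 < f0 → 0 < ζ → ζ ≤ 1 / 2 →
      -- the nonlinearity
      ContDiffOn ℝ 1 f (Icc 0 1) →
      f 0 = 0 → f 1 = 0 →
      (∀ s ∈ Icc (0 : ℝ) 1, 0 ≤ f s) →
      (∀ θ ∈ Ioo (θ1 - ζ) (θ4 + ζ), f0 < f θ) →
      -- the function T
      ContDiff ℝ 2 (fun p : ℝ × ℝ => T p.1 p.2) →
      (∀ x' y' : ℝ, T x' y' ∈ Icc (0 : ℝ) 1) →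
      -- the interval I_j ⊆ [0,H]
      Icc (c - h) (c + h) ⊆ Icc 0 H →
      -- at the fixed x there is y' ∈ I_j with T(x,y') ∈ [θ₁,θ₄]
      (∃ y' ∈ Icc (c - h) (c + h), T x y' ∈ Icc θ1 θ4) →
      |κ * ∫ y in Icc (c - h) (c + h), kerG h (y - c) * qYY T x y| ≤
        C * (Real.sqrt f0)⁻¹ * ζ⁻¹ * (κ / (v0 * h)) *
          ((v0 ^ 2 / κ) * (∫ y in Icc (c - h) (c + h), f (T x y)) +
            κ * ∫ y in Icc (c - h) (c + h), (qX T x y ^ 2 + qY T x y ^ 2)) := by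
  refine ⟨2, two_pos, ?_⟩
  intro κ v0 _ _ _ f0 ζ c h x f T hκ hv0 _ hh _ _ _ hf0 hζ hζ2 hf _ _ hfnn hfpos hT hT01 _
    ⟨y, hy, hTy⟩
  have hg : ContDiff ℝ 2 (T x) := hT.comp (contDiff_const.prodMk contDiff_id)
  have hkernel : ∫ y in Icc (c - h) (c + h), kerG h (y - c) * qYY T x y =
      secondDiff (T x) c h / h := setIntegral_kerG_mul_deriv_deriv hg hh c
  have hgrad : ∫ y in Icc (c - h) (c + h), qY T x y ^ 2 ≤
      ∫ y in Icc (c - h) (c + h), (qX T x y ^ 2 + qY T x y ^ 2) :=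
    setIntegral_mono_on ((hg.continuous_deriv one_le_two).pow 2).integrableOn_Icc
      ((((continuous_qX (hT.of_le one_le_two) x).pow 2).add
        ((hg.continuous_deriv one_le_two).pow 2)).integrableOn_Icc) measurableSet_Icc
      fun y _ => le_add_of_nonneg_left (sq_nonneg _)
  rw [hkernel]
  refine abs_mul_div_le_of_mul_abs_le hκ hv0 (sqrt_pos.2 hf0) hζ hh
    ((sqrt_mul_abs_secondDiff_le_setIntegral (hg.of_le one_le_two) (hT01 x) hf.continuousOn
      hfnn hfpos hκ hv0.le hf0.le hζ hζ2 hh.le hy hTy).trans ?_)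
  exact mul_le_mul_of_nonneg_left (add_le_add le_rfl (mul_le_mul_of_nonneg_left hgrad hκ.le))
    zero_le_two

end
end

section
/- Let T(·,·) be a C¹ function on the strip with values in [0,1], let I_j = [c_j−h_j, c_j+h_j] ⊂ [0,H] be an interval on which ‖u‖_{∞,j}/2 ≤ |u(y)| ≤ ‖u‖_{∞,j} and u(y) > 0 (‖u‖_{∞,j} = sup_{I_j}|u|), let θ₃ < θ₄ and F_j = ∫_{c_j−h_j}^{c_j+h_j} G(h_j, y−c_j) u(y) dy, and suppose x₀ and η₀ > 0 are such that ∫_{c_j−h_j}^{c_j+h_j} G(h_j, y−c_j) u(y) [T(x₀,y) − T(x₀+η₀,y)] dy ≥ (θ₄−θ₃) F_j. Then there is a universal constant C > 0 such that | (κ/η₀) ∫_{c_j−h_j}^{c_j+h_j} G(h_j, y−c_j) [T(x₀+η₀,y) − T(x₀,y)] dy | ≤ C κ (θ₄−θ₃)^{-2} ∫_{c_j−h_j}^{c_j+h_j} ∫_{x₀}^{x₀+η₀} |∇T(x,y)|² dx dy. -/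
set_option autoImplicit false

open MeasureTheory Real Filter Set

noncomputable section

/-!
Write `I = [c - h, c + h]`, `θ = θ₄ - θ₃` and `ΔT = T(x₀ + η₀, ·) - T(x₀, ·)`.
On the middle half of `I` the kernel is at least `1/2` and `u ≥ M/2`, so `F ≥ Mh/4`; as the
weight `G u` lies in `[0, M]` and `-ΔT ≤ 1`, the flux drop forces `θ ≤ 1` and
`A := ∫_I |ΔT| ≥ θh/4`. Writing `ΔT(y) = ∫ ∂ₓT(x, y) dx` over `[x₀, x₀ + η₀]` and applying
Cauchy–Schwarz in `x` and then in `y` gives `A² ≤ 2hη₀ ∫∫ |∇T|²`, hence `A ≤ 8η₀ ∫∫ |∇T|² / θ`.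
Since `0 ≤ G ≤ 1` the left-hand side is at most `κA/η₀`, which gives the claim with `C = 8`.
-/

theorem sq_integral_le_measureReal_univ_mul_integral_sq {α : Type*} [MeasurableSpace α]
    {μ : Measure α} [IsFiniteMeasure μ] {f : α → ℝ} (hf : Integrable f μ)
    (hf2 : Integrable (fun x => f x ^ 2) μ) :
    (∫ x, f x ∂μ) ^ 2 ≤ μ.real univ * ∫ x, f x ^ 2 ∂μ := by
  set m := μ.real univ
  set a := ∫ x, f x ∂μ
  rcases (measureReal_nonneg : 0 ≤ m).eq_or_lt with hm | hm
  · have hμ : μ = 0 := Measure.measure_univ_eq_zero.mp <|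
      (measureReal_eq_zero_iff (measure_ne_top μ univ)).mp hm.symm
    simp [a, hμ]
  · -- `0 ≤ ∫ (m f - a)² = m (m ∫ f² - a²)`
    have expand : ∫ x, (m * f x - a) ^ 2 ∂μ = m * (m * ∫ x, f x ^ 2 ∂μ - a ^ 2) := by
      have h1 := hf2.const_mul (m ^ 2)
      have h2 := hf.const_mul (2 * m * a)
      simp_rw [show ∀ x, (m * f x - a) ^ 2 = m ^ 2 * f x ^ 2 - 2 * m * a * f x + a ^ 2 from
        fun x => by ring]
      have h12 : Integrable (fun x => m ^ 2 * f x ^ 2 - 2 * m * a * f x) μ := h1.sub h2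
      rw [integral_add h12 (integrable_const _), integral_sub h1 h2, integral_const_mul,
        integral_const_mul, integral_const, smul_eq_mul]
      ring
    have key : 0 ≤ ∫ x, (m * f x - a) ^ 2 ∂μ := integral_nonneg fun x => sq_nonneg _
    nlinarith

theorem kerG_nonneg (h ξ : ℝ) : 0 ≤ kerG h ξ := le_max_right _ _

theorem kerG_le_one {h : ℝ} (hh : 0 ≤ h) (ξ : ℝ) : kerG h ξ ≤ 1 :=
  max_le (by linarith [div_nonneg (abs_nonneg ξ) hh]) zero_le_one

theorem abs_kerG_le_one {h : ℝ} (hh : 0 ≤ h) (ξ : ℝ) : |kerG h ξ| ≤ 1 := by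
  rw [abs_of_nonneg (kerG_nonneg h ξ)]; exact kerG_le_one hh ξ

theorem one_half_le_kerG {h ξ : ℝ} (hh : 0 < h) (hξ : |ξ| ≤ h / 2) : 1 / 2 ≤ kerG h ξ :=
  le_max_of_le_left <| by linarith [(div_le_iff₀ hh).mpr (show |ξ| ≤ 1 / 2 * h by linarith)]

theorem continuous_kerG (h : ℝ) : Continuous (kerG h) := by
  unfold kerG; fun_prop

theorem hasDerivAt_qX {T : ℝ → ℝ → ℝ} {x y : ℝ}
    (hT : DifferentiableAt ℝ (Function.uncurry T) (x, y)) :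
    HasDerivAt (fun s => T s y) (qX T x y) x :=
  (DifferentiableAt.comp (g := Function.uncurry T) (f := fun s => (s, y)) x hT
    (differentiableAt_id.prodMk (differentiableAt_const y))).hasDerivAt

theorem qX_eq_fderiv {T : ℝ → ℝ → ℝ} {x y : ℝ}
    (hT : DifferentiableAt ℝ (Function.uncurry T) (x, y)) :
    qX T x y = fderiv ℝ (Function.uncurry T) (x, y) (1, 0) :=
  (HasFDerivAt.comp_hasDerivAt (l := Function.uncurry T) x hT.hasFDerivAt
    ((hasDerivAt_id x).prodMk (hasDerivAt_const x y))).deriv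

theorem qY_eq_fderiv {T : ℝ → ℝ → ℝ} {x y : ℝ}
    (hT : DifferentiableAt ℝ (Function.uncurry T) (x, y)) :
    qY T x y = fderiv ℝ (Function.uncurry T) (x, y) (0, 1) :=
  (HasFDerivAt.comp_hasDerivAt (l := Function.uncurry T) y hT.hasFDerivAt
    ((hasDerivAt_const y x).prodMk (hasDerivAt_id y))).deriv

theorem continuous_qX_s7 {T : ℝ → ℝ → ℝ} (hT : ContDiff ℝ 1 (Function.uncurry T)) :
    Continuous (Function.uncurry (qX T)) := by
  simp only [Function.uncurry_def, qX_eq_fderiv (hT.differentiable one_ne_zero _)]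
  exact (hT.continuous_fderiv one_ne_zero).clm_apply continuous_const

theorem continuous_qY {T : ℝ → ℝ → ℝ} (hT : ContDiff ℝ 1 (Function.uncurry T)) :
    Continuous (Function.uncurry (qY T)) := by
  simp only [Function.uncurry_def, qY_eq_fderiv (hT.differentiable one_ne_zero _)]
  exact (hT.continuous_fderiv one_ne_zero).clm_apply continuous_const

theorem sub_eq_setIntegral_qX {T : ℝ → ℝ → ℝ} (hT : ContDiff ℝ 1 (Function.uncurry T))
    {a b : ℝ} (hab : a ≤ b) (y : ℝ) : T b y - T a y = ∫ x in Icc a b, qX T x y := by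
  rw [integral_Icc_eq_integral_Ioc, ← intervalIntegral.integral_of_le hab,
    intervalIntegral.integral_eq_sub_of_hasDerivAt
      (fun x _ => hasDerivAt_qX (hT.differentiable one_ne_zero (x, y)))
      (((continuous_qX_s7 hT).comp (continuous_id.prodMk continuous_const) :
        Continuous fun x => qX T x y).intervalIntegrable _ _)]

theorem sq_setIntegral_Icc_le {a b : ℝ} (hab : a ≤ b) {f : ℝ → ℝ}
    (hf : ContinuousOn f (Icc a b)) :
    (∫ x in Icc a b, f x) ^ 2 ≤ (b - a) * ∫ x in Icc a b, f x ^ 2 := by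
  simpa only [measureReal_restrict_apply_univ, volume_real_Icc_of_le hab] using
    sq_integral_le_measureReal_univ_mul_integral_sq (μ := volume.restrict (Icc a b))
      (hf.integrableOn_compact isCompact_Icc) ((hf.pow 2).integrableOn_compact isCompact_Icc)

theorem abs_setIntegral_mul_le_mul_setIntegral_abs {α : Type*} [MeasurableSpace α]
    {μ : Measure α} {s : Set α} (hs : MeasurableSet s) {w g : α → ℝ} {M : ℝ}
    (hg : IntegrableOn g s μ) (hw : ∀ x ∈ s, |w x| ≤ M) :
    |∫ x in s, w x * g x ∂μ| ≤ M * ∫ x in s, |g x| ∂μ := by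
  rw [← integral_const_mul]
  refine (abs_integral_le_integral_abs).trans <| integral_mono_of_nonneg
    (ae_of_all _ fun x => abs_nonneg _) (hg.abs.const_mul M) ?_
  filter_upwards [ae_restrict_mem hs] with x hx
  rw [abs_mul]
  exact mul_le_mul_of_nonneg_right (hw x hx) (abs_nonneg _)

theorem mul_le_setIntegral_kerG_mul {h c m : ℝ} {u : ℝ → ℝ} (hh : 0 < h)
    (hu : ContinuousOn u (Icc (c - h) (c + h))) (hu_nonneg : ∀ y ∈ Icc (c - h) (c + h), 0 ≤ u y)
    (hm : ∀ y ∈ Icc (c - h) (c + h), m ≤ u y) :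
    m * h / 2 ≤ ∫ y in Icc (c - h) (c + h), kerG h (y - c) * u y := by
  have hsub : Icc (c - h / 2) (c + h / 2) ⊆ Icc (c - h) (c + h) :=
    Icc_subset_Icc (by linarith) (by linarith)
  have hint : IntegrableOn (fun y => kerG h (y - c) * u y) (Icc (c - h) (c + h)) :=
    (((continuous_kerG h).comp (continuous_sub_right c)).continuousOn.mul hu).integrableOn_Icc
  have hmiddle : ∀ y ∈ Icc (c - h / 2) (c + h / 2), m / 2 ≤ kerG h (y - c) * u y := by
    intro y hy
    have hG : 1 / 2 ≤ kerG h (y - c) :=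
      one_half_le_kerG hh (abs_sub_le_iff.mpr ⟨by linarith [hy.2], by linarith [hy.1]⟩)
    nlinarith [hm y (hsub hy), hu_nonneg y (hsub hy)]
  calc m * h / 2 = ∫ _ in Icc (c - h / 2) (c + h / 2), m / 2 := by
        rw [setIntegral_const, volume_real_Icc_of_le (by linarith), smul_eq_mul]; ring
    _ ≤ ∫ y in Icc (c - h / 2) (c + h / 2), kerG h (y - c) * u y :=
        setIntegral_mono_on (integrableOn_const measure_Icc_lt_top.ne) (hint.mono_set hsub)
          measurableSet_Icc hmiddle
    _ ≤ ∫ y in Icc (c - h) (c + h), kerG h (y - c) * u y :=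
        setIntegral_mono_set hint
          (ae_restrict_of_forall_mem measurableSet_Icc fun y hy =>
            mul_nonneg (kerG_nonneg _ _) (hu_nonneg y hy))
          hsub.eventuallyLE

theorem flux_drop_bounds {h c M θ : ℝ} {u g : ℝ → ℝ} (hh : 0 < h) (hθ : 0 ≤ θ)
    (hu : ContinuousOn u (Icc (c - h) (c + h))) (hu_pos : ∀ y ∈ Icc (c - h) (c + h), 0 < u y)
    (hu_bound : ∀ y ∈ Icc (c - h) (c + h), M / 2 ≤ u y ∧ u y ≤ M)
    (hg : ContinuousOn g (Icc (c - h) (c + h))) (hg_le : ∀ y ∈ Icc (c - h) (c + h), g y ≤ 1)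
    (hflux : θ * ∫ y in Icc (c - h) (c + h), kerG h (y - c) * u y ≤
      ∫ y in Icc (c - h) (c + h), kerG h (y - c) * u y * g y) :
    θ ≤ 1 ∧ θ * h / 4 ≤ ∫ y in Icc (c - h) (c + h), |g y| := by
  set I := Icc (c - h) (c + h)
  set F := ∫ y in I, kerG h (y - c) * u y
  have hcI : c ∈ I := ⟨by linarith, by linarith⟩
  have hM : 0 < M := (hu_pos c hcI).trans_le (hu_bound c hcI).2
  have hw : ContinuousOn (fun y => kerG h (y - c) * u y) I :=
    ((continuous_kerG h).comp (continuous_sub_right c)).continuousOn.mul hu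
  have hF : M / 2 * h / 2 ≤ F := mul_le_setIntegral_kerG_mul hh hu
    (fun y hy => (hu_pos y hy).le) fun y hy => (hu_bound y hy).1
  have hflux_le_F : ∫ y in I, kerG h (y - c) * u y * g y ≤ F :=
    setIntegral_mono_on (hw.mul hg).integrableOn_Icc hw.integrableOn_Icc measurableSet_Icc
      fun y hy => mul_le_of_le_one_right
        (mul_nonneg (kerG_nonneg _ _) (hu_pos y hy).le) (hg_le y hy)
  have hflux_le_MA : ∫ y in I, kerG h (y - c) * u y * g y ≤ M * ∫ y in I, |g y| :=
    (le_abs_self _).trans <| abs_setIntegral_mul_le_mul_setIntegral_abs measurableSet_Icc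
      hg.integrableOn_Icc fun y hy => by
        rw [abs_mul, abs_of_nonneg (kerG_nonneg _ _), abs_of_pos (hu_pos y hy)]
        exact mul_le_of_le_one_left (hu_pos y hy).le (kerG_le_one hh.le _) |>.trans
          (hu_bound y hy).2
  have hFpos : 0 < F := lt_of_lt_of_le (by positivity) hF
  constructor
  · exact le_of_mul_le_mul_right (by linarith) hFpos
  · refine le_of_mul_le_mul_left ?_ hM
    nlinarith [mul_le_mul_of_nonneg_left hF hθ]

theorem setIntegral_sq_sub_le_mul_setIntegral_gradient_sq {T : ℝ → ℝ → ℝ}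
    (hT : ContDiff ℝ 1 (Function.uncurry T)) {a η : ℝ} (hη : 0 ≤ η) (p q : ℝ) :
    ∫ y in Icc p q, (T (a + η) y - T a y) ^ 2 ≤
      η * ∫ y in Icc p q, ∫ x in Icc a (a + η), (qX T x y ^ 2 + qY T x y ^ 2) := by
  have hqX (y : ℝ) : Continuous fun x => qX T x y :=
    (continuous_qX_s7 hT).comp (continuous_id.prodMk continuous_const)
  have hqY (y : ℝ) : Continuous fun x => qY T x y :=
    (continuous_qY hT).comp (continuous_id.prodMk continuous_const)
  have hT_cont (x : ℝ) : Continuous fun y => T x y :=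
    hT.continuous.comp (continuous_const.prodMk continuous_id)
  have henergy : Continuous fun y => ∫ x in Icc a (a + η), (qX T x y ^ 2 + qY T x y ^ 2) :=
    continuous_parametric_integral_of_continuous
      (((continuous_qX_s7 hT).comp continuous_swap).pow 2 |>.add
        (((continuous_qY hT).comp continuous_swap).pow 2)) isCompact_Icc
  rw [← integral_const_mul]
  refine setIntegral_mono_on (((hT_cont _).sub (hT_cont _)).pow 2).integrableOn_Icc
    (henergy.const_mul η).integrableOn_Icc measurableSet_Icc fun y _ => ?_
  calc (T (a + η) y - T a y) ^ 2 = (∫ x in Icc a (a + η), qX T x y) ^ 2 := by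
        rw [sub_eq_setIntegral_qX hT (by linarith)]
    _ ≤ η * ∫ x in Icc a (a + η), qX T x y ^ 2 := by
        simpa only [add_sub_cancel_left] using
          sq_setIntegral_Icc_le (a := a) (b := a + η) (by linarith) (hqX y).continuousOn
    _ ≤ η * ∫ x in Icc a (a + η), (qX T x y ^ 2 + qY T x y ^ 2) :=
        mul_le_mul_of_nonneg_left (setIntegral_mono_on ((hqX y).pow 2).integrableOn_Icc
          (((hqX y).pow 2).add ((hqY y).pow 2)).integrableOn_Icc measurableSet_Icc
          fun x _ => le_add_of_nonneg_right (sq_nonneg _)) hη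

theorem div_mul_le_mul_inv_sq_mul {κ η θ h A D : ℝ} (hκ : 0 < κ) (hη : 0 < η) (hθ : 0 < θ)
    (hθ1 : θ ≤ 1) (hh : 0 < h) (hA : θ * h / 4 ≤ A) (hA2 : A ^ 2 ≤ 2 * h * (η * D)) :
    κ / η * A ≤ 8 * κ * (θ ^ 2)⁻¹ * D := by
  have hA_pos : 0 < A := lt_of_lt_of_le (by positivity) hA
  have hD : 0 ≤ D := by nlinarith [mul_pos hh hη]
  -- `A² ≤ 2hηD ≤ 8AηD/θ`, since `h ≤ 4A/θ`
  have hA_le : A ≤ 8 * η * D / θ := by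
    rw [le_div_iff₀ hθ]
    nlinarith [mul_le_mul_of_nonneg_left hA (by positivity : (0 : ℝ) ≤ 8 * η * D)]
  calc κ / η * A ≤ κ / η * (8 * η * D / θ) := by gcongr
    _ = 8 * κ * θ⁻¹ * D := by field_simp
    _ ≤ 8 * κ * (θ ^ 2)⁻¹ * D := by
        gcongr
        nlinarith

/-- Lemma 2.1: control of the averaged temperature difference
across `[x₀, x₀+η₀]` by the integral of `|∇T|²`, with a universal constant. -/
theorem averaged_difference_bound :
    ∃ C > 0, ∀ (κ H θ3 θ4 c h x0 η0 F M : ℝ) (u : ℝ → ℝ) (T : ℝ → ℝ → ℝ),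
      0 < κ → 0 < H → 0 < h → 0 < η0 → θ3 < θ4 →
      -- the shear profile
      ContDiffOn ℝ 1 u (Icc 0 H) →
      -- the function T
      ContDiff ℝ 1 (fun p : ℝ × ℝ => T p.1 p.2) →
      (∀ x' y' : ℝ, T x' y' ∈ Icc (0 : ℝ) 1) →
      -- the interval I_j ⊆ [0,H], on which ‖u‖/2 ≤ |u| ≤ ‖u‖ and u > 0
      Icc (c - h) (c + h) ⊆ Icc 0 H →
      (∀ y ∈ Icc (c - h) (c + h), M / 2 ≤ |u y| ∧ |u y| ≤ M) →
      (∀ y ∈ Icc (c - h) (c + h), 0 < u y) →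
      F = (∫ y in Icc (c - h) (c + h), kerG h (y - c) * u y) →
      -- the flux drop hypothesis
      (θ4 - θ3) * F ≤
        (∫ y in Icc (c - h) (c + h),
          kerG h (y - c) * u y * (T x0 y - T (x0 + η0) y)) →
      |(κ / η0) * ∫ y in Icc (c - h) (c + h),
          kerG h (y - c) * (T (x0 + η0) y - T x0 y)| ≤
        C * κ * ((θ4 - θ3) ^ 2)⁻¹ *
          ∫ y in Icc (c - h) (c + h), ∫ x in Icc x0 (x0 + η0),
            (qX T x y ^ 2 + qY T x y ^ 2) := by
  refine ⟨8, by norm_num, fun κ H θ3 θ4 c h x0 η0 F M u T hκ _ hh hη hθ hu hT hT01 hIH huM hu_pos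
    hF hflux => ?_⟩
  set I := Icc (c - h) (c + h)
  set D := ∫ y in I, ∫ x in Icc x0 (x0 + η0), (qX T x y ^ 2 + qY T x y ^ 2)
  have hT_cont (x : ℝ) : Continuous fun y => T x y :=
    hT.continuous.comp (continuous_const.prodMk continuous_id)
  have hΔ : Continuous fun y => T (x0 + η0) y - T x0 y := (hT_cont _).sub (hT_cont _)
  obtain ⟨hθ1, hA⟩ := flux_drop_bounds (g := fun y => T x0 y - T (x0 + η0) y) hh
    (sub_pos.2 hθ).le (hu.continuousOn.mono hIH) hu_pos
    (fun y hy => by simpa only [abs_of_pos (hu_pos y hy)] using huM y hy)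
    ((hT_cont _).sub (hT_cont _)).continuousOn
    (fun y _ => by linarith [(hT01 x0 y).2, (hT01 (x0 + η0) y).1]) (hF ▸ hflux)
  simp only [abs_sub_comm (T x0 _)] at hA
  have hA2 : (∫ y in I, |T (x0 + η0) y - T x0 y|) ^ 2 ≤ 2 * h * (η0 * D) :=
    calc _ ≤ (c + h - (c - h)) * ∫ y in I, |T (x0 + η0) y - T x0 y| ^ 2 :=
          sq_setIntegral_Icc_le (by linarith) hΔ.abs.continuousOn
      _ ≤ 2 * h * (η0 * D) := by
          rw [show c + h - (c - h) = 2 * h by ring]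
          simp only [sq_abs]
          gcongr
          exact setIntegral_sq_sub_le_mul_setIntegral_gradient_sq hT hη.le _ _
  rw [abs_mul, abs_of_pos (div_pos hκ hη)]
  calc κ / η0 * |∫ y in I, kerG h (y - c) * (T (x0 + η0) y - T x0 y)|
      ≤ κ / η0 * ∫ y in I, |T (x0 + η0) y - T x0 y| := by
        gcongr
        simpa only [one_mul] using abs_setIntegral_mul_le_mul_setIntegral_abs measurableSet_Icc
          hΔ.integrableOn_Icc fun y _ => abs_kerG_le_one hh.le (y - c)
    _ ≤ 8 * κ * ((θ4 - θ3) ^ 2)⁻¹ * D :=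
        div_mul_le_mul_inv_sq_mul hκ hη (sub_pos.2 hθ) hθ1 hh hA hA2

end
end

section
/- Let H > 0 and ρ(x,y) = H sin(x/H) sin(y/H). Then Δρ = −(2/H²) ρ, and |∇ρ(x,y)|² = sin²(x/H) + sin²(y/H) − 2ρ(x,y)²/H². Moreover, at every point (x,y) where 0 < ρ(x,y) ≤ H/2, one has |∇ρ(x,y)|² ≥ 2(ρ/H)(1 − ρ/H) ≥ ρ/H, and consequently |Δρ(x,y)| / |∇ρ(x,y)|² ≤ 2/H. -/
set_option autoImplicit false

open Real Set

noncomputable section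

/-- the normalized stream function `ρ(x,y) = H sin(x/H) sin(y/H)`. -/
def rhoFn (H x y : ℝ) : ℝ := H * Real.sin (x / H) * Real.sin (y / H)

/-- the Laplacian of `ρ`. -/
def lapRho (H x y : ℝ) : ℝ :=
  deriv (fun s => deriv (fun s' => rhoFn H s' y) s) x +
  deriv (fun s => deriv (fun s' => rhoFn H x s') s) y

/-- the squared gradient of `ρ`. -/
def gradRhoSq (H x y : ℝ) : ℝ :=
  (deriv (fun s => rhoFn H s y) x) ^ 2 + (deriv (fun s => rhoFn H x s) y) ^ 2

/-! With `a = sin (x/H)` and `b = sin (y/H)` one has `ρ/H = a b`, `Δρ = -(2/H²) ρ` and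
`|∇ρ|² = cos² (x/H) b² + a² cos² (y/H) = a² + b² - 2 (a b)²`. Since `a² + b² ≥ 2 a b`, this is
at least `2 r (1 - r)` with `r = ρ/H`, which is `≥ r` as soon as `r ≤ 1/2`; dividing
`|Δρ| = (2/H) r` by it gives the bound `2/H`. -/

section StreamFunction

variable {H : ℝ}

theorem hasDerivAt_mul_sin_div (hH : H ≠ 0) (x : ℝ) :
    HasDerivAt (fun s => H * sin (s / H)) (cos (x / H)) x := by
  have h := ((hasDerivAt_id x).div_const H).sin.const_mul H
  simp only [id, one_div] at h
  exact h.congr_deriv (by field_simp)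

theorem hasDerivAt_cos_div (x : ℝ) :
    HasDerivAt (fun s => cos (s / H)) (-sin (x / H) / H) x := by
  have h := ((hasDerivAt_id x).div_const H).cos
  simp only [id] at h
  exact h.congr_deriv (by ring)

theorem deriv_rhoFn_left (hH : H ≠ 0) (y : ℝ) :
    deriv (fun s => rhoFn H s y) = fun s => cos (s / H) * sin (y / H) :=
  funext fun s => ((hasDerivAt_mul_sin_div hH s).mul_const (sin (y / H))).deriv

theorem deriv_rhoFn_right (hH : H ≠ 0) (x : ℝ) :
    deriv (fun s => rhoFn H x s) = fun s => sin (x / H) * cos (s / H) := by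
  funext s
  have h := (hasDerivAt_mul_sin_div hH s).const_mul (sin (x / H))
  simp only [rhoFn, mul_comm H, mul_assoc] at h ⊢
  exact h.deriv

theorem lapRho_eq (hH : H ≠ 0) (x y : ℝ) : lapRho H x y = -(2 / H ^ 2) * rhoFn H x y := by
  rw [lapRho, deriv_rhoFn_left hH, deriv_rhoFn_right hH,
    ((hasDerivAt_cos_div x).mul_const _).deriv, ((hasDerivAt_cos_div y).const_mul _).deriv, rhoFn]
  field_simp
  ring

theorem gradRhoSq_eq (hH : H ≠ 0) (x y : ℝ) :
    gradRhoSq H x y = sin (x / H) ^ 2 + sin (y / H) ^ 2 - 2 * rhoFn H x y ^ 2 / H ^ 2 := by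
  rw [gradRhoSq, deriv_rhoFn_left hH, deriv_rhoFn_right hH, rhoFn]
  simp only [mul_pow, cos_sq']
  field_simp
  ring

theorem rhoFn_div_self (hH : H ≠ 0) (x y : ℝ) : rhoFn H x y / H = sin (x / H) * sin (y / H) := by
  rw [rhoFn]
  field_simp

theorem two_mul_mul_one_sub_le_gradRhoSq (hH : H ≠ 0) (x y : ℝ) :
    2 * (rhoFn H x y / H) * (1 - rhoFn H x y / H) ≤ gradRhoSq H x y := by
  have h : 2 * rhoFn H x y ^ 2 / H ^ 2 = 2 * (rhoFn H x y / H) ^ 2 := by ring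
  rw [gradRhoSq_eq hH, h, rhoFn_div_self hH]
  nlinarith [two_mul_le_add_sq (sin (x / H)) (sin (y / H))]

end StreamFunction

theorem le_two_mul_mul_one_sub {r : ℝ} (hr₀ : 0 ≤ r) (hr : r ≤ 1 / 2) : r ≤ 2 * r * (1 - r) := by
  nlinarith

/-- pointwise estimates on the stream function of the cellular
flow: `Δρ = -(2/H²)ρ`, the explicit formula for `|∇ρ|²`, and the lower bounds for
`|∇ρ|²` in the region `0 < ρ ≤ H/2`. -/
theorem cellular_stream_function_estimates (H : ℝ) (hH : 0 < H) (x y : ℝ) :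
    lapRho H x y = -(2 / H ^ 2) * rhoFn H x y ∧
    gradRhoSq H x y =
      Real.sin (x / H) ^ 2 + Real.sin (y / H) ^ 2 - 2 * rhoFn H x y ^ 2 / H ^ 2 ∧
    (0 < rhoFn H x y → rhoFn H x y ≤ H / 2 →
      2 * (rhoFn H x y / H) * (1 - rhoFn H x y / H) ≤ gradRhoSq H x y ∧
      rhoFn H x y / H ≤ 2 * (rhoFn H x y / H) * (1 - rhoFn H x y / H) ∧
      |lapRho H x y| / gradRhoSq H x y ≤ 2 / H) := by
  refine ⟨lapRho_eq hH.ne' x y, gradRhoSq_eq hH.ne' x y, fun hpos hle => ?_⟩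
  set r := rhoFn H x y / H with hr
  have hr₀ : 0 < r := div_pos hpos hH
  have hgrad := two_mul_mul_one_sub_le_gradRhoSq hH.ne' x y
  have hr_le := le_two_mul_mul_one_sub hr₀.le (by rw [hr, div_le_iff₀ hH]; linarith)
  refine ⟨hgrad, hr_le, ?_⟩
  have hlap : |lapRho H x y| = 2 / H * r := by
    rw [lapRho_eq hH.ne', abs_mul, abs_neg, abs_of_pos (by positivity), abs_of_pos hpos, hr]
    ring
  calc |lapRho H x y| / gradRhoSq H x y ≤ 2 / H * r / r := by
        rw [hlap]
        gcongr
        exact hr_le.trans hgrad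
    _ = 2 / H := by field_simp
end
end
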